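/- Block generalized Schur complement identity: for a PSD matrix M = [[A,B,C],[Bᵀ,D,E],[Cᵀ,Eᵀ,F]], taking the Schur complement with respect to the full lower-right 2×2 block [[D,E],[Eᵀ,F]] gives the same result as first taking the Schur complement with respect to D and then with respect to F - EᵀD†E: M /† [[D,E],[Eᵀ,F]] = A - BD†Bᵀ - (C - BD†E)(F - EᵀD†E)†(C - BD†E)ᵀ. -/

import Mathlib

open Matrix

/-- The four Moore–Penrose conditions: `Dp` is the Moore–Penrose pseudoinverse of `D`. -/
def IsMP {α : Type*} [Fintype α] [DecidableEq α] (D Dp : Matrix α α ℝ) : Prop :=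
  D * Dp * D = D ∧ Dp * D * Dp = Dp ∧ (D * Dp)ᵀ = D * Dp ∧ (Dp * D)ᵀ = Dp * D

/-!
Write `N = [[D, E], [Eᵀ, F]]` and `U = [B C]`. Positive semidefiniteness of `M` forces the range
condition `U G N = U` for every generalized inverse `G` of `N` (`N G N = N`), so `U G Uᵀ` does
not depend on the choice of `G`. The same range condition inside `N` gives `D D† E = E`, which
makes Banachiewicz's block formula, built from `D†` and `(F - Eᵀ D† E)†`, a generalized inverse
of `N`; evaluating `U G Uᵀ` at it gives the right-hand side.
-/

namespace IsMP

variable {α : Type*} [Fintype α] [DecidableEq α] {D X Y : Matrix α α ℝ}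

theorem transpose (h : IsMP D X) : IsMP Dᵀ Xᵀ := by
  obtain ⟨h₁, h₂, h₃, h₄⟩ := h
  refine ⟨?_, ?_, ?_, ?_⟩
  · rw [← transpose_mul, ← transpose_mul, ← Matrix.mul_assoc, h₁]
  · rw [← transpose_mul, ← transpose_mul, ← Matrix.mul_assoc, h₂]
  · rw [← transpose_mul, h₄, h₄]
  · rw [← transpose_mul, h₃, h₃]

theorem unique (hX : IsMP D X) (hY : IsMP D Y) : X = Y := by
  obtain ⟨hX₁, hX₂, hX₃, hX₄⟩ := hX
  obtain ⟨hY₁, hY₂, hY₃, hY₄⟩ := hY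
  have hDX : D * X = D * Y := by
    calc D * X = (D * Y) * (D * X) := by rw [← Matrix.mul_assoc, hY₁]
    _ = ((D * X) * (D * Y))ᵀ := by rw [transpose_mul, hX₃, hY₃]
    _ = D * Y := by rw [← Matrix.mul_assoc, hX₁, hY₃]
  have hXD : X * D = Y * D := by
    calc X * D = (X * D) * (Y * D) := by rw [Matrix.mul_assoc, ← Matrix.mul_assoc D, hY₁]
    _ = ((Y * D) * (X * D))ᵀ := by rw [transpose_mul, hX₄, hY₄]
    _ = Y * D := by rw [Matrix.mul_assoc, ← Matrix.mul_assoc D, hX₁, hY₄]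
  calc X = X * D * X := hX₂.symm
  _ = Y * D * Y := by rw [hXD, Matrix.mul_assoc, hDX, ← Matrix.mul_assoc]
  _ = Y := hY₂

theorem transpose_eq (h : IsMP D X) (hD : Dᵀ = D) : Xᵀ = X :=
  (hD ▸ h.transpose).unique h

end IsMP

namespace Matrix

section PosSemidef

open scoped ComplexOrder

variable {𝕜 : Type*} [RCLike 𝕜] {ι κ : Type*} [Fintype ι]

section
open scoped MatrixOrder

theorem PosSemidef.mul_eq_zero_of_conjTranspose_mul_mul_eq_zero {M : Matrix ι ι 𝕜}
    (hM : M.PosSemidef) {X : Matrix ι κ 𝕜} (h : Xᴴ * M * X = 0) : M * X = 0 := by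
  classical
  obtain ⟨K, rfl⟩ := CStarAlgebra.nonneg_iff_eq_star_mul_self.mp hM.nonneg
  have hKX : (K * X)ᴴ * (K * X) = 0 := by
    simpa only [conjTranspose_mul, star_eq_conjTranspose, Matrix.mul_assoc] using h
  rw [star_eq_conjTranspose, Matrix.mul_assoc, conjTranspose_mul_self_eq_zero.mp hKX,
    Matrix.mul_zero]

end

variable [Fintype κ] [DecidableEq κ] {A : Matrix ι ι 𝕜} {U : Matrix ι κ 𝕜}
  {N G H : Matrix κ κ 𝕜}

theorem PosSemidef.mul_mul_eq_of_fromBlocks (hM : (fromBlocks A U Uᴴ N).PosSemidef)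
    (hG : N * G * N = N) : U * G * N = U := by
  have hNG : N * (1 - G * N) = 0 := by
    rw [Matrix.mul_sub, Matrix.mul_one, ← Matrix.mul_assoc, hG, sub_self]
  set X := fromRows (0 : Matrix ι κ 𝕜) (1 - G * N)
  have hMX : fromBlocks A U Uᴴ N * X = fromRows (U * (1 - G * N)) 0 := by
    rw [fromBlocks_mul_fromRows, hNG, Matrix.mul_zero, Matrix.mul_zero, zero_add, zero_add]
  have hX := hM.mul_eq_zero_of_conjTranspose_mul_mul_eq_zero (X := X) <| by
    rw [Matrix.mul_assoc, hMX, conjTranspose_fromRows_eq_fromCols_conjTranspose,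
      fromCols_mul_fromRows, conjTranspose_zero, Matrix.zero_mul, Matrix.mul_zero, add_zero]
  rw [hMX, ← fromRows_zero, fromRows_ext_iff, Matrix.mul_sub, Matrix.mul_one, sub_eq_zero] at hX
  rw [Matrix.mul_assoc, ← hX.1]

theorem PosSemidef.mul_mul_conjTranspose_eq_of_fromBlocks
    (hM : (fromBlocks A U Uᴴ N).PosSemidef) (hG : N * G * N = N) (hH : N * H * N = N) :
    U * G * Uᴴ = U * H * Uᴴ := by
  have hN : Nᴴ = N := (hM.submatrix Sum.inr : N.PosSemidef).1.eq
  have hU : U * H * N = U := hM.mul_mul_eq_of_fromBlocks hH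
  have hUH : N * Hᴴ * Uᴴ = Uᴴ := by
    simpa only [conjTranspose_mul, hN, Matrix.mul_assoc] using congrArg (·ᴴ) hU
  calc U * G * Uᴴ = U * H * N * G * (N * Hᴴ * Uᴴ) := by rw [hU, hUH]
  _ = U * H * (N * G * N) * Hᴴ * Uᴴ := by simp only [Matrix.mul_assoc]
  _ = U * H * (N * Hᴴ * Uᴴ) := by rw [hG]; simp only [Matrix.mul_assoc]
  _ = U * H * Uᴴ := by rw [hUH]

end PosSemidef

section Ring

variable {R : Type*} [Ring R] {m n : Type*} [Fintype m] [Fintype n]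

/-- Banachiewicz's block-inverse formula for `[[A, B], [C, D]]`, with `Ap` a generalized inverse
of `A` and `Sp` one of the Schur complement `D - C Ap B`. -/
def banachiewiczInverse (Ap : Matrix m m R) (B : Matrix m n R) (C : Matrix n m R)
    (Sp : Matrix n n R) : Matrix (m ⊕ n) (m ⊕ n) R :=
  fromBlocks (Ap + Ap * B * Sp * C * Ap) (-(Ap * B * Sp)) (-(Sp * C * Ap)) Sp

theorem fromBlocks_mul_banachiewiczInverse_mul {A Ap : Matrix m m R} {B : Matrix m n R}
    {C : Matrix n m R} {D Sp : Matrix n n R} (hA : A * Ap * A = A) (hB : A * Ap * B = B)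
    (hC : C * Ap * A = C) (hS : (D - C * Ap * B) * Sp * (D - C * Ap * B) = D - C * Ap * B) :
    fromBlocks A B C D * banachiewiczInverse Ap B C Sp * fromBlocks A B C D =
      fromBlocks A B C D := by
  obtain ⟨S, rfl⟩ : ∃ S, D = S + C * Ap * B := ⟨D - C * Ap * B, by abel⟩
  rw [add_sub_cancel_right] at hS
  have hC' : S * Sp * C * Ap * A = S * Sp * C := by
    rw [Matrix.mul_assoc (S * Sp) C, Matrix.mul_assoc (S * Sp), hC]
  simp only [banachiewiczInverse, fromBlocks_multiply, fromBlocks_inj, Matrix.mul_add,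
    Matrix.add_mul, Matrix.mul_neg, Matrix.neg_mul, ← Matrix.mul_assoc, hA, hB, hC, hS, hC']
  refine ⟨?_, ?_, ?_, ?_⟩ <;> abel

end Ring

section CommRing

variable {R : Type*} [CommRing R] {l m n : Type*} [Fintype m] [Fintype n]

theorem fromCols_mul_banachiewiczInverse_mul_transpose (B : Matrix l m R) (C : Matrix l n R)
    (E : Matrix m n R) {Dp : Matrix m m R} (Sp : Matrix n n R) (hDp : Dpᵀ = Dp) :
    fromCols B C * banachiewiczInverse Dp E Eᵀ Sp * (fromCols B C)ᵀ =
      B * Dp * Bᵀ + (C - B * Dp * E) * Sp * (C - B * Dp * E)ᵀ := by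
  rw [transpose_fromCols, banachiewiczInverse, fromCols_mul_fromBlocks, fromCols_mul_fromRows,
    transpose_sub, transpose_mul, transpose_mul, hDp]
  simp only [Matrix.mul_add, Matrix.add_mul, Matrix.mul_sub, Matrix.sub_mul, Matrix.mul_neg,
    Matrix.neg_mul, ← Matrix.mul_assoc]
  abel

end CommRing

end Matrix

theorem block_gsc_identity {n m p : ℕ}
    (A : Matrix (Fin n) (Fin n) ℝ) (B : Matrix (Fin n) (Fin m) ℝ)
    (C : Matrix (Fin n) (Fin p) ℝ) (D : Matrix (Fin m) (Fin m) ℝ)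
    (E : Matrix (Fin m) (Fin p) ℝ) (F : Matrix (Fin p) (Fin p) ℝ)
    (Dp : Matrix (Fin m) (Fin m) ℝ) (Sp : Matrix (Fin p) (Fin p) ℝ)
    (Mbarp : Matrix (Fin m ⊕ Fin p) (Fin m ⊕ Fin p) ℝ)
    (hM : (Matrix.fromBlocks A (Matrix.fromCols B C) (Matrix.fromRows Bᵀ Cᵀ)
            (Matrix.fromBlocks D E Eᵀ F)).PosSemidef)
    (hDp : IsMP D Dp)
    (hSp : IsMP (F - Eᵀ * Dp * E) Sp)
    (hMbarp : IsMP (Matrix.fromBlocks D E Eᵀ F) Mbarp) :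
    A - (Matrix.fromCols B C) * Mbarp * (Matrix.fromCols B C)ᵀ =
      A - B * Dp * Bᵀ - (C - B * Dp * E) * Sp * (C - B * Dp * E)ᵀ := by
  rw [← transpose_fromCols, ← conjTranspose_eq_transpose_of_trivial (fromCols B C)] at hM
  have hN : (fromBlocks D E Eᵀ F).PosSemidef := hM.submatrix Sum.inr
  have hD : Dᵀ = D := by
    rw [← conjTranspose_eq_transpose_of_trivial]
    exact (hN.submatrix Sum.inl : D.PosSemidef).1.eq
  have hDp_symm : Dpᵀ = Dp := hDp.transpose_eq hD
  have hEDpD : Eᵀ * Dp * D = Eᵀ := by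
    have hswap : (fromBlocks F Eᵀ Eᵀᴴ D).PosSemidef := by
      simpa only [fromBlocks_submatrix_sum_swap_sum_swap, conjTranspose_eq_transpose_of_trivial,
        transpose_transpose] using hN.submatrix Sum.swap
    exact hswap.mul_mul_eq_of_fromBlocks hDp.1
  have hDDpE : D * Dp * E = E := by
    simpa only [transpose_mul, transpose_transpose, hD, hDp_symm, Matrix.mul_assoc]
      using congrArg (·ᵀ) hEDpD
  have hW := fromBlocks_mul_banachiewiczInverse_mul hDp.1 hDDpE hEDpD hSp.1
  have hinv := hM.mul_mul_conjTranspose_eq_of_fromBlocks hMbarp.1 hW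
  rw [conjTranspose_eq_transpose_of_trivial] at hinv
  rw [hinv, fromCols_mul_banachiewiczInverse_mul_transpose _ _ _ _ hDp_symm, sub_add_eq_sub_sub]
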